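/- arXiv:1303.7364 — 2 statements merged into one kernel-verified Lean document; each statement's English description precedes it below -/
import Mathlib

section
/- Projection formula for tropical superforms: Let F: ℝ^{r'} → ℝ^r be an affine map with integral linear part, (𝒞', m) a weighted integral ℝ-affine polyhedral complex of pure dimension n in ℝ^{r'} whose image F_*(𝒞') is a polyhedral complex with push-forward weights, and α a compactly supported (n,n)-superform on F_*(𝒞'). Then ∫_{F_*(𝒞',m)} α = ∫_{(𝒞',m)} F*(α). -/
open MeasureTheory

attribute [local instance] Classical.propDecidable

/-- A superform of bidegree `(p,q)` on (an open subset of) `ℝ^r`, given in components. -/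
abbrev Superform (r p q : ℕ) := (Fin p → Fin r) → (Fin q → Fin r) → (Fin r → ℝ) → ℝ

namespace Superform

def Smooth {r p q : ℕ} (α : Superform r p q) (U : Set (Fin r → ℝ)) : Prop :=
  ∀ I J, ContDiffOn ℝ (⊤ : ℕ∞) (α I J) U

def IsAlternating {r p q : ℕ} (α : Superform r p q) : Prop :=
  (∀ I J x (τ : Equiv.Perm (Fin p)), α (I ∘ τ) J x = ((Equiv.Perm.sign τ : ℤ) : ℝ) * α I J x) ∧
  (∀ I J x (τ : Equiv.Perm (Fin q)), α I (J ∘ τ) x = ((Equiv.Perm.sign τ : ℤ) : ℝ) * α I J x) ∧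
  (∀ I J x, ¬ Function.Injective I → α I J x = 0) ∧
  (∀ I J x, ¬ Function.Injective J → α I J x = 0)

def support {r p q : ℕ} (α : Superform r p q) : Set (Fin r → ℝ) :=
  closure {x | ∃ I J, α I J x ≠ 0}

noncomputable def pullback {r r' p q : ℕ} (A : Matrix (Fin r) (Fin r') ℝ) (b : Fin r → ℝ)
    (α : Superform r p q) : Superform r' p q :=
  fun I' J' x =>
    ∑ I : Fin p → Fin r, ∑ J : Fin q → Fin r,
      (∏ a, A (I a) (I' a)) * (∏ c, A (J c) (J' c)) *
        α I J (fun i => (∑ j, A i j * x j) + b i)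

noncomputable def integral {n : ℕ} (α : Superform n n n) (S : Set (Fin n → ℝ)) : ℝ :=
  (-1 : ℝ) ^ (n * (n - 1) / 2) * ∫ x in S, α (fun i => i) (fun i => i) x

end Superform

def IsIntegralPolyhedron {r : ℕ} (S : Set (Fin r → ℝ)) : Prop :=
  ∃ (m : ℕ) (u : Fin m → Fin r → ℤ) (c : Fin m → ℝ),
    S = {x | ∀ i, (∑ j, (u i j : ℝ) * x j) ≤ c i}

noncomputable def pdim {r : ℕ} (S : Set (Fin r → ℝ)) : ℕ :=
  Module.finrank ℝ (vectorSpan ℝ S)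

/-- Integration of an `(n,n)`-superform over an `n`-dimensional integral ℝ-affine
polyhedron, via a lattice parametrization `t ↦ b + ∑ t_a E_a`. -/
noncomputable def cellIntegral {r n : ℕ} (E : Fin n → Fin r → ℤ) (b : Fin r → ℝ)
    (σ : Set (Fin r → ℝ)) (η : Superform r n n) : ℝ :=
  Superform.integral
    (Superform.pullback (Matrix.of fun (j : Fin r) (a : Fin n) => (E a j : ℝ)) b η)
    {t : Fin n → ℝ | (fun j => b j + ∑ a, (E a j : ℝ) * t a) ∈ σ}

/-- A lattice parametrization of an `n`-dimensional polyhedron `σ`: the affine map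
`t ↦ b + ∑ t_a E_a` covers `σ` and `E` is a ℤ-basis of the canonical lattice
`N_σ = ℤ^r ∩ L_σ`. -/
def LatticeParam {r n : ℕ} (E : Fin n → Fin r → ℤ) (b : Fin r → ℝ)
    (σ : Set (Fin r → ℝ)) : Prop :=
  (∀ x ∈ σ, ∃ t : Fin n → ℝ, ∀ j, x j = b j + ∑ a, (E a j : ℝ) * t a) ∧
  (∀ cc : Fin n → ℝ,
    (∃ v : Fin r → ℤ, ∀ j, (v j : ℝ) = ∑ a, cc a * (E a j : ℝ)) →
      ∀ a, ∃ z : ℤ, cc a = (z : ℝ))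


section Lemmas

open Finset

lemma sum_mul_sum_comm {ι κ : Type*} [Fintype ι] [Fintype κ] (f : ι → ℝ) (g : κ → ℝ)
    (S : ι → κ → ℝ) :
    ∑ y, g y * ∑ x, f x * S x y = ∑ x, f x * ∑ y, g y * S x y := by
  simp only [Finset.mul_sum]
  rw [Finset.sum_comm]
  exact Finset.sum_congr rfl fun x _ => Finset.sum_congr rfl fun y _ => by ring

lemma pull_one {p r r' m : ℕ} (A : Matrix (Fin r) (Fin r') ℝ) (B : Matrix (Fin r') (Fin m) ℝ)
    (I'' : Fin p → Fin m) (h : (Fin p → Fin r) → ℝ) :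
    ∑ I' : Fin p → Fin r', (∏ a, B (I' a) (I'' a)) *
        (∑ I : Fin p → Fin r, (∏ a, A (I a) (I' a)) * h I)
      = ∑ I : Fin p → Fin r, (∏ a, (A * B) (I a) (I'' a)) * h I := by
  calc ∑ I' : Fin p → Fin r', (∏ a, B (I' a) (I'' a)) *
          (∑ I : Fin p → Fin r, (∏ a, A (I a) (I' a)) * h I)
      = ∑ I' : Fin p → Fin r', ∑ I : Fin p → Fin r,
          (∏ a, B (I' a) (I'' a)) * ((∏ a, A (I a) (I' a)) * h I) := by
        simp [Finset.mul_sum]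
    _ = ∑ I : Fin p → Fin r, ∑ I' : Fin p → Fin r',
          (∏ a, B (I' a) (I'' a)) * ((∏ a, A (I a) (I' a)) * h I) := Finset.sum_comm
    _ = ∑ I : Fin p → Fin r, (∑ I' : Fin p → Fin r',
          ∏ a, A (I a) (I' a) * B (I' a) (I'' a)) * h I := by
        refine Finset.sum_congr rfl fun I _ => ?_
        rw [Finset.sum_mul]
        refine Finset.sum_congr rfl fun I' _ => ?_
        rw [Finset.prod_mul_distrib]; ring
    _ = ∑ I : Fin p → Fin r, (∏ a, (A * B) (I a) (I'' a)) * h I := by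
        refine Finset.sum_congr rfl fun I _ => ?_
        congr 1
        have := Finset.prod_univ_sum (fun _ : Fin p => (Finset.univ : Finset (Fin r')))
          (fun a j => A (I a) j * B j (I'' a))
        rw [Fintype.piFinset_univ] at this
        rw [← this]
        exact Finset.prod_congr rfl fun a _ => by simp [Matrix.mul_apply]

end Lemmas
lemma pullback_pullback {r r' m p q : ℕ} (A : Matrix (Fin r) (Fin r') ℝ)
    (B : Matrix (Fin r') (Fin m) ℝ) (b : Fin r → ℝ) (c : Fin r' → ℝ) (α : Superform r p q) :
    Superform.pullback B c (Superform.pullback A b α)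
      = Superform.pullback (A * B) (fun i => (∑ j, A i j * c j) + b i) α := by
  funext I'' J'' x
  have hz : (fun i => (∑ j, A i j * ((∑ k, B j k * x k) + c j)) + b i)
      = fun i => (∑ j, (A * B) i j * x j) + ((∑ j, A i j * c j) + b i) := by
    funext i
    simp only [mul_add, Finset.mul_sum, Finset.sum_add_distrib, Matrix.mul_apply,
      Finset.sum_mul]
    rw [add_assoc]
    congr 1
    rw [Finset.sum_comm]
    exact Finset.sum_congr rfl fun j _ => Finset.sum_congr rfl fun k _ => by ring
  set z : Fin r → ℝ := fun i => (∑ j, (A * B) i j * x j) + ((∑ j, A i j * c j) + b i) with hzdef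
  have e1 : ∀ (I' : Fin p → Fin r') (J' : Fin q → Fin r'),
      Superform.pullback A b α I' J' (fun i => (∑ j, B i j * x j) + c i)
        = ∑ I : Fin p → Fin r, (∏ a, A (I a) (I' a)) *
            ∑ J : Fin q → Fin r, (∏ c', A (J c') (J' c')) * α I J z := by
    intro I' J'
    simp only [Superform.pullback, hz, hzdef]
    exact Finset.sum_congr rfl fun I _ => by
      rw [Finset.mul_sum]; exact Finset.sum_congr rfl fun J _ => by ring
  show ∑ I' : Fin p → Fin r', ∑ J' : Fin q → Fin r',
      (∏ a, B (I' a) (I'' a)) * (∏ c', B (J' c') (J'' c')) *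
        Superform.pullback A b α I' J' (fun i => (∑ j, B i j * x j) + c i) = _
  simp only [e1]
  calc ∑ I' : Fin p → Fin r', ∑ J' : Fin q → Fin r',
        (∏ a, B (I' a) (I'' a)) * (∏ c', B (J' c') (J'' c')) *
          ∑ I : Fin p → Fin r, (∏ a, A (I a) (I' a)) *
            ∑ J : Fin q → Fin r, (∏ c', A (J c') (J' c')) * α I J z
      = ∑ I' : Fin p → Fin r', (∏ a, B (I' a) (I'' a)) *
          ∑ I : Fin p → Fin r, (∏ a, A (I a) (I' a)) *
            ∑ J' : Fin q → Fin r', (∏ c', B (J' c') (J'' c')) *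
              ∑ J : Fin q → Fin r, (∏ c', A (J c') (J' c')) * α I J z := by
        refine Finset.sum_congr rfl fun I' _ => ?_
        rw [← sum_mul_sum_comm (fun I : Fin p → Fin r => ∏ a, A (I a) (I' a))
          (fun J' : Fin q → Fin r' => ∏ c', B (J' c') (J'' c'))
          (fun I J' => ∑ J : Fin q → Fin r, (∏ c', A (J c') (J' c')) * α I J z),
          Finset.mul_sum]
        exact Finset.sum_congr rfl fun J' _ => by ring
    _ = ∑ I : Fin p → Fin r, (∏ a, (A * B) (I a) (I'' a)) *
          ∑ J' : Fin q → Fin r', (∏ c', B (J' c') (J'' c')) *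
            ∑ J : Fin q → Fin r, (∏ c', A (J c') (J' c')) * α I J z :=
        pull_one A B I'' _
    _ = ∑ I : Fin p → Fin r, ∑ J : Fin q → Fin r,
          (∏ a, (A * B) (I a) (I'' a)) * (∏ c', (A * B) (J c') (J'' c')) * α I J z := by
        refine Finset.sum_congr rfl fun I _ => ?_
        rw [pull_one A B J'' (fun J => α I J z), Finset.mul_sum]
        exact Finset.sum_congr rfl fun J _ => by ring
    _ = _ := rfl
lemma alt_aux {p m : ℕ} (g : (Fin p → Fin m) → ℝ)
    (hg : ∀ I (τ : Equiv.Perm (Fin p)), g (I ∘ τ) = ((Equiv.Perm.sign τ : ℤ) : ℝ) * g I)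
    (I : Fin p → Fin m) (hI : ¬ Function.Injective I) : g I = 0 := by
  simp only [Function.Injective, not_forall] at hI
  obtain ⟨a, b, hab, hne⟩ := hI
  have h1 := hg I (Equiv.swap a b)
  have h2 : I ∘ (Equiv.swap a b) = I := by
    funext x
    rcases eq_or_ne x a with rfl | hxa
    · simp [Equiv.swap_apply_left, hab]
    rcases eq_or_ne x b with rfl | hxb
    · simp [Equiv.swap_apply_right, hab]
    · simp [Equiv.swap_apply_of_ne_of_ne hxa hxb]
  rw [h2, Equiv.Perm.sign_swap hne] at h1
  push_cast at h1
  linarith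

lemma sum_reindex_perm {p m : ℕ} (F : (Fin p → Fin m) → ℝ) (τ : Equiv.Perm (Fin p)) :
    ∑ I : Fin p → Fin m, F I = ∑ I : Fin p → Fin m, F (I ∘ τ) := by
  refine (Fintype.sum_bijective (fun I : Fin p → Fin m => I ∘ τ) ?_ _ _ fun I => rfl).symm
  constructor
  · intro I₁ I₂ h
    funext a
    have := congrFun h (τ.symm a)
    simpa using this
  · intro K
    exact ⟨K ∘ τ.symm, by funext a; simp⟩

lemma pullback_isAlternating {r r' p q : ℕ} (A : Matrix (Fin r) (Fin r') ℝ) (b : Fin r → ℝ)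
    (α : Superform r p q) (h : α.IsAlternating) :
    (Superform.pullback A b α).IsAlternating := by
  have key1 : ∀ (I'' : Fin p → Fin r') (J'' : Fin q → Fin r') (x) (τ : Equiv.Perm (Fin p)),
      Superform.pullback A b α (I'' ∘ τ) J'' x
        = ((Equiv.Perm.sign τ : ℤ) : ℝ) * Superform.pullback A b α I'' J'' x := by
    intro I'' J'' x τ
    simp only [Superform.pullback]
    rw [sum_reindex_perm (fun I => ∑ J : Fin q → Fin r,
      (∏ a, A (I a) ((I'' ∘ τ) a)) * (∏ c', A (J c') (J'' c')) *
        α I J (fun i => (∑ j, A i j * x j) + b i)) τ]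
    rw [Finset.mul_sum]
    refine Finset.sum_congr rfl fun I _ => ?_
    rw [Finset.mul_sum]
    refine Finset.sum_congr rfl fun J _ => ?_
    have hprod : (∏ a, A ((I ∘ τ) a) ((I'' ∘ τ) a)) = ∏ a, A (I a) (I'' a) :=
      Equiv.prod_comp τ (fun a => A (I a) (I'' a))
    rw [hprod, h.1 I J _ τ]
    ring
  have key2 : ∀ (I'' : Fin p → Fin r') (J'' : Fin q → Fin r') (x) (τ : Equiv.Perm (Fin q)),
      Superform.pullback A b α I'' (J'' ∘ τ) x
        = ((Equiv.Perm.sign τ : ℤ) : ℝ) * Superform.pullback A b α I'' J'' x := by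
    intro I'' J'' x τ
    simp only [Superform.pullback]
    rw [Finset.mul_sum]
    refine Finset.sum_congr rfl fun I _ => ?_
    rw [sum_reindex_perm (fun J => (∏ a, A (I a) (I'' a)) * (∏ c', A (J c') ((J'' ∘ τ) c')) *
        α I J (fun i => (∑ j, A i j * x j) + b i)) τ]
    rw [Finset.mul_sum]
    refine Finset.sum_congr rfl fun J _ => ?_
    have hprod : (∏ c', A ((J ∘ τ) c') ((J'' ∘ τ) c')) = ∏ c', A (J c') (J'' c') :=
      Equiv.prod_comp τ (fun c' => A (J c') (J'' c'))
    rw [hprod, h.2.1 I J _ τ]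
    ring
  refine ⟨key1, key2, ?_, ?_⟩
  · intro I J x hI
    exact alt_aux (fun I => Superform.pullback A b α I J x) (fun I τ => key1 I J x τ) I hI
  · intro I J x hJ
    exact alt_aux (fun J => Superform.pullback A b α I J x) (fun J τ => key2 I J x τ) J hJ
lemma alternating_sum_vanish {n r : ℕ} (v : Fin n → (Fin r → ℝ)) (h : (Fin n → Fin r) → ℝ)
    (hperm : ∀ I (τ : Equiv.Perm (Fin n)), h (I ∘ τ) = ((Equiv.Perm.sign τ : ℤ) : ℝ) * h I)
    (hdep : ¬ LinearIndependent ℝ v) :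
    ∑ I : Fin n → Fin r, (∏ a, v a (I a)) * h I = 0 := by
  set G : MultilinearMap ℝ (fun _ : Fin n => (Fin r → ℝ)) ℝ :=
    ∑ I : Fin n → Fin r, h I •
      (MultilinearMap.mkPiAlgebra ℝ (Fin n) ℝ).compLinearMap
        (fun a => LinearMap.proj (I a)) with hGdef
  have hG : ∀ w : Fin n → (Fin r → ℝ), G w = ∑ I : Fin n → Fin r, (∏ a, w a (I a)) * h I := by
    intro w
    rw [hGdef]
    rw [MultilinearMap.sum_apply]
    exact Finset.sum_congr rfl fun I _ => by
      simp [MultilinearMap.smul_apply, MultilinearMap.compLinearMap_apply,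
        MultilinearMap.mkPiAlgebra_apply, mul_comm]
  have hswap : ∀ (w : Fin n → (Fin r → ℝ)) (τ : Equiv.Perm (Fin n)),
      G (w ∘ τ) = ((Equiv.Perm.sign τ : ℤ) : ℝ) * G w := by
    intro w τ
    rw [hG, hG, Finset.mul_sum]
    rw [sum_reindex_perm (fun I => (∏ a, (w ∘ τ) a (I a)) * h I) τ]
    refine Finset.sum_congr rfl fun I _ => ?_
    have hprod : (∏ a, (w ∘ τ) a ((I ∘ τ) a)) = ∏ a, w a (I a) :=
      Equiv.prod_comp τ (fun a => w a (I a))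
    rw [hprod, hperm I τ]
    ring
  have hzero : ∀ (w : Fin n → (Fin r → ℝ)) (i j : Fin n), w i = w j → i ≠ j → G w = 0 := by
    intro w i j hij hne
    have h2 : w ∘ (Equiv.swap i j) = w := by
      funext x
      rcases eq_or_ne x i with rfl | hxi
      · simp [Equiv.swap_apply_left, hij]
      rcases eq_or_ne x j with rfl | hxj
      · simp [Equiv.swap_apply_right, hij]
      · simp [Equiv.swap_apply_of_ne_of_ne hxi hxj]
    have := hswap w (Equiv.swap i j)
    rw [h2, Equiv.Perm.sign_swap hne] at this
    push_cast at this
    linarith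
  set Galt : (Fin r → ℝ) [⋀^Fin n]→ₗ[ℝ] ℝ := ⟨G, fun w i j hij hne => hzero w i j hij hne⟩
  have := Galt.map_linearDependent v hdep
  rw [show Galt v = G v from rfl, hG] at this
  exact this
lemma sum_fun_eq_sum_perm {n : ℕ} (f : (Fin n → Fin n) → ℝ)
    (h0 : ∀ I, ¬ Function.Injective I → f I = 0) :
    ∑ I : Fin n → Fin n, f I = ∑ σ : Equiv.Perm (Fin n), f σ := by
  classical
  rw [← Finset.sum_image (g := fun σ : Equiv.Perm (Fin n) => (σ : Fin n → Fin n))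
    (fun x _ y _ h => Equiv.coe_fn_injective h)]
  refine (Finset.sum_subset (Finset.subset_univ _) ?_).symm
  intro I _ hI
  refine h0 I fun hinj => hI ?_
  have hbij : Function.Bijective I := Finite.injective_iff_bijective.mp hinj
  refine Finset.mem_image.mpr ⟨Equiv.ofBijective I hbij, Finset.mem_univ _, rfl⟩

lemma pullback_sq {n : ℕ} (Dm : Matrix (Fin n) (Fin n) ℝ) (c : Fin n → ℝ)
    (η : Superform n n n) (hη : η.IsAlternating) (t : Fin n → ℝ) :
    (Superform.pullback Dm c η) (fun i => i) (fun i => i) t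
      = Dm.det ^ 2 * η (fun i => i) (fun i => i) (fun i => (∑ j, Dm i j * t j) + c i) := by
  set y : Fin n → ℝ := fun i => (∑ j, Dm i j * t j) + c i with hy
  show (∑ I : Fin n → Fin n, ∑ J : Fin n → Fin n,
    (∏ a, Dm (I a) a) * (∏ c', Dm (J c') c') * η I J y) = _
  rw [sum_fun_eq_sum_perm _ (fun I hI => by
    refine Finset.sum_eq_zero fun J _ => ?_
    rw [hη.2.2.1 I J y hI]; ring)]
  have hinner : ∀ σ : Equiv.Perm (Fin n),
      ∑ J : Fin n → Fin n, (∏ a, Dm (σ a) a) * (∏ c', Dm (J c') c') * η (⇑σ) J y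
        = ∑ π : Equiv.Perm (Fin n), (∏ a, Dm (σ a) a) * (∏ c', Dm (π c') c') * η (⇑σ) (⇑π) y :=
    fun σ => sum_fun_eq_sum_perm _ (fun J hJ => by rw [hη.2.2.2 (⇑σ) J y hJ]; ring)
  simp only [hinner]
  have hsign : ∀ (σ π : Equiv.Perm (Fin n)), η (⇑σ) (⇑π) y
      = ((Equiv.Perm.sign σ : ℤ) : ℝ) * (((Equiv.Perm.sign π : ℤ) : ℝ) *
          η (fun i => i) (fun i => i) y) := by
    intro σ π
    have h1 : η (⇑σ) (⇑π) y = ((Equiv.Perm.sign σ : ℤ) : ℝ) * η (fun i => i) (⇑π) y :=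
      hη.1 (fun i => i) (⇑π) y σ
    have h2 : η (fun i => i) (⇑π) y
        = ((Equiv.Perm.sign π : ℤ) : ℝ) * η (fun i => i) (fun i => i) y :=
      hη.2.1 (fun i => i) (fun i => i) y π
    rw [h1, h2]
  have hdet : (∑ σ : Equiv.Perm (Fin n), ((Equiv.Perm.sign σ : ℤ) : ℝ) * ∏ a, Dm (σ a) a)
      = Dm.det := by
    rw [Matrix.det_apply]
    exact Finset.sum_congr rfl fun σ _ => by simp [Units.smul_def, zsmul_eq_mul]
  calc ∑ σ : Equiv.Perm (Fin n), ∑ π : Equiv.Perm (Fin n),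
        (∏ a, Dm (σ a) a) * (∏ c', Dm (π c') c') * η (⇑σ) (⇑π) y
      = (∑ σ : Equiv.Perm (Fin n), ((Equiv.Perm.sign σ : ℤ) : ℝ) * ∏ a, Dm (σ a) a) *
        (∑ π : Equiv.Perm (Fin n), ((Equiv.Perm.sign π : ℤ) : ℝ) * ∏ c', Dm (π c') c') *
          η (fun i => i) (fun i => i) y := by
        rw [Finset.sum_mul_sum, Finset.sum_mul]
        refine Finset.sum_congr rfl fun σ _ => ?_
        rw [Finset.sum_mul]
        refine Finset.sum_congr rfl fun π _ => ?_
        rw [hsign σ π]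
        ring
    _ = Dm.det ^ 2 * η (fun i => i) (fun i => i) y := by rw [hdet]; ring
lemma change_of_variables {n : ℕ} (Dm : Matrix (Fin n) (Fin n) ℝ) (c₀ : Fin n → ℝ)
    (hdet : Dm.det ≠ 0) (s : Set (Fin n → ℝ)) (hs : MeasurableSet s) (g : (Fin n → ℝ) → ℝ) :
    ∫ u in (fun t => Dm.mulVec t + c₀) '' s, g u
      = ∫ t in s, |Dm.det| * g (Dm.mulVec t + c₀) := by
  have hL : ∀ x : Fin n → ℝ, HasFDerivWithinAt (fun t => Dm.mulVec t + c₀)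
      (LinearMap.toContinuousLinearMap (Matrix.mulVecLin Dm)) s x := by
    intro x
    exact (((Matrix.mulVecLin Dm).toContinuousLinearMap.hasFDerivAt.add_const c₀)).hasFDerivWithinAt
  have hinj : Set.InjOn (fun t => Dm.mulVec t + c₀) s := by
    intro t1 _ t2 _ h
    have h0 : Dm.mulVec (t1 - t2) = 0 := by
      rw [Matrix.mulVec_sub]
      have : Dm.mulVec t1 = Dm.mulVec t2 := by
        have := congrArg (fun z => z - c₀) h
        simpa using this
      rw [this, sub_self]
    by_contra hne
    have : ∃ v, v ≠ 0 ∧ Dm.mulVec v = 0 := ⟨t1 - t2, sub_ne_zero.mpr hne, h0⟩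
    exact hdet (Matrix.exists_mulVec_eq_zero_iff.mp this)
  have := MeasureTheory.integral_image_eq_integral_abs_det_fderiv_smul
    (volume : Measure (Fin n → ℝ)) hs (fun x _ => hL x) hinj g
  rw [this]
  refine MeasureTheory.setIntegral_congr_fun hs fun t _ => ?_
  have hdet' : (LinearMap.toContinuousLinearMap (Matrix.mulVecLin Dm) :
      (Fin n → ℝ) →L[ℝ] (Fin n → ℝ)).det = Dm.det := by
    show LinearMap.det _ = _
    rw [show ((LinearMap.toContinuousLinearMap (Matrix.mulVecLin Dm) :
      (Fin n → ℝ) →L[ℝ] (Fin n → ℝ)) : (Fin n → ℝ) →ₗ[ℝ] (Fin n → ℝ)) = Matrix.mulVecLin Dm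
      from rfl]
    rw [← Matrix.toLin'_apply']
    exact LinearMap.det_toLin' Dm
  rw [hdet', smul_eq_mul]

lemma polyhedron_measurable {r' n : ℕ} (σ : Set (Fin r' → ℝ)) (hpoly : IsIntegralPolyhedron σ)
    (b : Fin r' → ℝ) (E : Fin n → Fin r' → ℤ) :
    MeasurableSet {t : Fin n → ℝ | (fun j => b j + ∑ a, (E a j : ℝ) * t a) ∈ σ} := by
  obtain ⟨m, u, c, rfl⟩ := hpoly
  have hcont : Continuous (fun t : Fin n → ℝ => (fun j => b j + ∑ a, (E a j : ℝ) * t a)) := by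
    refine continuous_pi fun j => Continuous.add continuous_const ?_
    exact continuous_finset_sum _ fun a _ => continuous_const.mul (continuous_apply a)
  have hclosed : IsClosed {x : Fin r' → ℝ | ∀ i, (∑ j, (u i j : ℝ) * x j) ≤ c i} := by
    have : {x : Fin r' → ℝ | ∀ i, (∑ j, (u i j : ℝ) * x j) ≤ c i}
        = ⋂ i, {x | (∑ j, (u i j : ℝ) * x j) ≤ c i} := by
      ext x; simp
    rw [this]
    refine isClosed_iInter fun i => isClosed_le ?_ continuous_const
    exact continuous_finset_sum _ fun j _ => continuous_const.mul (continuous_apply j)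
  exact (hclosed.preimage hcont).measurableSet

lemma lattice_inj {r n : ℕ} (E : Fin n → Fin r → ℤ) (b : Fin r → ℝ) (σ : Set (Fin r → ℝ))
    (hp : LatticeParam E b σ) (cc : Fin n → ℝ) (hcc : ∀ j, (∑ a, cc a * (E a j : ℝ)) = 0) :
    cc = 0 := by
  funext a
  by_contra hne
  obtain ⟨q, hq⟩ := pow_unbounded_of_one_lt |cc a| (by norm_num : (1:ℝ) < 2)
  have key : ∀ a', ∃ z : ℤ, cc a' / 2 ^ q = (z : ℝ) := by
    refine hp.2 (fun a' => cc a' / 2 ^ q) ⟨0, fun j => ?_⟩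
    have : ∑ a', cc a' / 2 ^ q * (E a' j : ℝ) = (∑ a', cc a' * (E a' j : ℝ)) / 2 ^ q := by
      rw [Finset.sum_div]
      exact Finset.sum_congr rfl fun a' _ => by ring
    rw [this, hcc j]
    simp
  obtain ⟨z, hz⟩ := key a
  have h2 : (2:ℝ) ^ q ≠ 0 := by positivity
  have hzq : cc a = (z:ℝ) * 2 ^ q := by rw [div_eq_iff h2] at hz; exact hz
  have hzne : z ≠ 0 := by rintro rfl; simp at hzq; exact hne hzq
  have h1 : (1:ℝ) ≤ |(z:ℝ)| := by
    rw [← Int.cast_abs]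
    exact_mod_cast Int.one_le_abs hzne
  have : |cc a| = |(z:ℝ)| * 2 ^ q := by
    rw [hzq, abs_mul]
    congr 1
    rw [abs_of_pos (by positivity : (0:ℝ) < 2 ^ q)]
  nlinarith [abs_nonneg (cc a)]
lemma mulVec_apply' {p q : ℕ} (M : Matrix (Fin p) (Fin q) ℝ) (v : Fin q → ℝ) (i : Fin p) :
    M.mulVec v i = ∑ j, M i j * v j := by
  simp [Matrix.mulVec, dotProduct]

lemma finrank_pi_fin (n : ℕ) : Module.finrank ℝ (Fin n → ℝ) = n := by
  simp [Module.finrank_pi]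

lemma vectorSpan_eq_range {r n : ℕ} (E : Fin n → Fin r → ℤ) (b : Fin r → ℝ)
    (σ : Set (Fin r → ℝ)) (hp : LatticeParam E b σ) (hdim : pdim σ = n) :
    vectorSpan ℝ σ
      = LinearMap.range (Matrix.mulVecLin (Matrix.of fun j a => (E a j : ℝ))) := by
  set M : Matrix (Fin r) (Fin n) ℝ := Matrix.of fun j a => (E a j : ℝ) with hM
  have hle : vectorSpan ℝ σ ≤ LinearMap.range M.mulVecLin := by
    rw [vectorSpan_def]
    refine Submodule.span_le.mpr ?_
    rintro v hv
    rw [Set.mem_vsub] at hv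
    obtain ⟨x, hx, y, hy, rfl⟩ := hv
    obtain ⟨tx, htx⟩ := hp.1 x hx
    obtain ⟨ty, hty⟩ := hp.1 y hy
    refine ⟨tx - ty, ?_⟩
    funext j
    rw [Matrix.mulVecLin_apply, mulVec_apply']
    show _ = (x - y) j
    rw [Pi.sub_apply, htx j, hty j]
    rw [show ∑ a, M j a * (tx - ty) a = ∑ a, ((E a j : ℝ) * tx a - (E a j : ℝ) * ty a) from
      Finset.sum_congr rfl fun a _ => by rw [Pi.sub_apply]; show (E a j : ℝ) * _ = _; ring]
    rw [Finset.sum_sub_distrib]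
    ring
  refine (Submodule.eq_of_le_of_finrank_le hle ?_).symm ▸ rfl
  calc Module.finrank ℝ (LinearMap.range M.mulVecLin)
      ≤ Module.finrank ℝ (Fin n → ℝ) := LinearMap.finrank_range_le _
    _ = n := finrank_pi_fin n
    _ = Module.finrank ℝ (vectorSpan ℝ σ) := hdim ▸ rfl

lemma vectorSpan_image_F {r r' : ℕ} (Aℝ : Matrix (Fin r) (Fin r') ℝ) (t0 : Fin r → ℝ)
    (S : Set (Fin r' → ℝ)) :
    vectorSpan ℝ ((fun x => fun j => (∑ jj, Aℝ j jj * x jj) + t0 j) '' S)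
      = Submodule.map Aℝ.mulVecLin (vectorSpan ℝ S) := by
  rw [vectorSpan_def, vectorSpan_def, ← Submodule.span_image]
  congr 1
  ext v
  rw [Set.mem_vsub]
  constructor
  · rintro ⟨x, hx, y, hy, rfl⟩
    obtain ⟨p, hp, rfl⟩ := hx
    obtain ⟨q, hq, rfl⟩ := hy
    refine ⟨p - q, Set.mem_vsub.mpr ⟨p, hp, q, hq, rfl⟩, ?_⟩
    funext j
    rw [Matrix.mulVecLin_apply, mulVec_apply']
    show _ = ((∑ jj, Aℝ j jj * p jj) + t0 j) - ((∑ jj, Aℝ j jj * q jj) + t0 j)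
    rw [show ∑ jj, Aℝ j jj * (p - q) jj = ∑ jj, (Aℝ j jj * p jj - Aℝ j jj * q jj) from
      Finset.sum_congr rfl fun jj _ => by rw [Pi.sub_apply]; ring]
    rw [Finset.sum_sub_distrib]
    ring
  · rintro ⟨w, hw, rfl⟩
    rw [Set.mem_vsub] at hw
    obtain ⟨p, hp, q, hq, rfl⟩ := hw
    refine ⟨_, Set.mem_image_of_mem _ hp, _, Set.mem_image_of_mem _ hq, ?_⟩
    funext j
    rw [Matrix.mulVecLin_apply, mulVec_apply']
    show ((∑ jj, Aℝ j jj * p jj) + t0 j) - ((∑ jj, Aℝ j jj * q jj) + t0 j) = _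
    rw [show p -ᵥ q = p - q from rfl]
    rw [show ∑ jj, Aℝ j jj * (p - q) jj = ∑ jj, (Aℝ j jj * p jj - Aℝ j jj * q jj) from
      Finset.sum_congr rfl fun jj _ => by rw [Pi.sub_apply]; ring]
    rw [Finset.sum_sub_distrib]
    ring
lemma cell_degenerate {r r' n : ℕ} (A : Matrix (Fin r) (Fin r') ℤ) (t0 : Fin r → ℝ)
    (σ : Set (Fin r' → ℝ)) (b' : Fin r' → ℝ) (E' : Fin n → Fin r' → ℤ)
    (hparam' : LatticeParam E' b' σ) (hσdim : pdim σ = n)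
    (hdim : pdim ((fun x => fun j => (∑ jj, ((A j jj : ℤ) : ℝ) * x jj) + t0 j) '' σ) ≠ n)
    (α : Superform r n n) (halt : α.IsAlternating) :
    cellIntegral E' b' σ
      (Superform.pullback (Matrix.of fun j jj => ((A j jj : ℤ) : ℝ)) t0 α) = 0 := by
  classical
  set Aℝ : Matrix (Fin r) (Fin r') ℝ := Matrix.of fun j jj => ((A j jj : ℤ) : ℝ) with hAR
  set M' : Matrix (Fin r') (Fin n) ℝ := Matrix.of fun j a => (E' a j : ℝ) with hM'
  set C : Matrix (Fin r) (Fin n) ℝ := Aℝ * M' with hC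
  -- columns of C are linearly dependent
  have hdep : ¬ LinearIndependent ℝ (fun a : Fin n => (fun j => C j a)) := by
    intro hli
    have hcols : Submodule.span ℝ (Set.range (fun a : Fin n => (fun j => C j a)))
        ≤ LinearMap.range C.mulVecLin := by
      refine Submodule.span_le.mpr ?_
      rintro v ⟨a, rfl⟩
      refine ⟨Pi.single a 1, ?_⟩
      funext j
      rw [Matrix.mulVecLin_apply, mulVec_apply']
      rw [Finset.sum_eq_single a (fun b _ hb => by simp [Pi.single_apply, hb])
        (fun h => absurd (Finset.mem_univ a) h)]
      simp
    have h1 : Module.finrank ℝ (Submodule.span ℝ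
        (Set.range (fun a : Fin n => (fun j => C j a)))) = n := by
      rw [finrank_span_eq_card hli]
      simp
    have h2 : Module.finrank ℝ (LinearMap.range C.mulVecLin) ≤ n :=
      le_trans (LinearMap.finrank_range_le _) (le_of_eq (finrank_pi_fin n))
    have h3 : Module.finrank ℝ (LinearMap.range C.mulVecLin) = n :=
      le_antisymm h2 (le_trans (le_of_eq h1.symm) (Submodule.finrank_mono hcols))
    have h4 : vectorSpan ℝ ((fun x => fun j => (∑ jj, ((A j jj : ℤ) : ℝ) * x jj) + t0 j) '' σ)
        = LinearMap.range C.mulVecLin := by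
      have h5 := vectorSpan_image_F Aℝ t0 σ
      rw [vectorSpan_eq_range E' b' σ hparam' hσdim] at h5
      rw [show (Matrix.of fun (j : Fin r') (a : Fin n) => (E' a j : ℝ)) = M' from rfl,
        ← LinearMap.range_comp, ← Matrix.mulVecLin_mul] at h5
      exact h5
    exact hdim (by rw [pdim, h4, h3])
  -- hence the pulled-back form vanishes identically
  have hvanish : ∀ t : Fin n → ℝ,
      (Superform.pullback C (fun i => (∑ j, Aℝ i j * b' j) + t0 i) α)
        (fun i => i) (fun i => i) t = 0 := by
    intro t
    set y : Fin r → ℝ := fun i =>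
      (∑ j, C i j * t j) + ((∑ j, Aℝ i j * b' j) + t0 i) with hy
    show (∑ I : Fin n → Fin r, ∑ J : Fin n → Fin r,
      (∏ a, C (I a) a) * (∏ c', C (J c') c') * α I J y) = 0
    rw [Finset.sum_comm]
    refine Finset.sum_eq_zero fun J _ => ?_
    have := alternating_sum_vanish (fun a : Fin n => (fun j => C j a))
      (fun I => (∏ c', C (J c') c') * α I J y)
      (fun I τ => by
        show (∏ c', C (J c') c') * α (I ∘ τ) J y = _
        rw [halt.1 I J y τ]; ring) hdep
    rw [← this]
    exact Finset.sum_congr rfl fun I _ => by ring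
  rw [cellIntegral, show (Matrix.of fun (j : Fin r') (a : Fin n) => (E' a j : ℝ)) = M' from rfl,
    pullback_pullback Aℝ M' t0 b' α, ← hC]
  rw [Superform.integral]
  have : ∫ t in {t : Fin n → ℝ | (fun j => b' j + ∑ a, (E' a j : ℝ) * t a) ∈ σ},
      (Superform.pullback C (fun i => (∑ j, Aℝ i j * b' j) + t0 i) α)
        (fun i => i) (fun i => i) t = 0 := by
    rw [show (fun t => (Superform.pullback C (fun i => (∑ j, Aℝ i j * b' j) + t0 i) α)
      (fun i => i) (fun i => i) t) = fun _ => (0:ℝ) from funext hvanish]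
    simp
  rw [this, mul_zero]
lemma cell_nondegenerate {r r' n : ℕ} (A : Matrix (Fin r) (Fin r') ℤ) (t0 : Fin r → ℝ)
    (σ : Set (Fin r' → ℝ)) (b' : Fin r' → ℝ) (E' : Fin n → Fin r' → ℤ)
    (hσpoly : IsIntegralPolyhedron σ) (hparam' : LatticeParam E' b' σ)
    (τk : Set (Fin r → ℝ)) (bτ : Fin r → ℝ) (Eτ : Fin n → Fin r → ℤ)
    (hparamτ : LatticeParam Eτ bτ τk) (hτdim : pdim τk = n)
    (Dm : Matrix (Fin n) (Fin n) ℤ)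
    (himage : (fun x => fun j => (∑ jj, ((A j jj : ℤ) : ℝ) * x jj) + t0 j) '' σ = τk)
    (hD : ∀ a j, (∑ jj, A j jj * E' a jj) = ∑ cI, Dm cI a * Eτ cI j)
    (α : Superform r n n) (halt : α.IsAlternating) :
    cellIntegral E' b' σ
        (Superform.pullback (Matrix.of fun j jj => ((A j jj : ℤ) : ℝ)) t0 α)
      = |((Dm.det : ℤ) : ℝ)| * cellIntegral Eτ bτ τk α := by
  classical
  set Aℝ : Matrix (Fin r) (Fin r') ℝ := Matrix.of fun j jj => ((A j jj : ℤ) : ℝ) with hAR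
  set M' : Matrix (Fin r') (Fin n) ℝ := Matrix.of fun j a => (E' a j : ℝ) with hM'
  set Mτ : Matrix (Fin r) (Fin n) ℝ := Matrix.of fun j a => (Eτ a j : ℝ) with hMτ
  set Dℝ : Matrix (Fin n) (Fin n) ℝ := Matrix.of fun c a => ((Dm c a : ℤ) : ℝ) with hDR
  set Tσ : Set (Fin n → ℝ) :=
    {t | (fun j => b' j + ∑ a, (E' a j : ℝ) * t a) ∈ σ} with hTσ
  set Tτ : Set (Fin n → ℝ) :=
    {t | (fun j => bτ j + ∑ a, (Eτ a j : ℝ) * t a) ∈ τk} with hTτ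
  set β : Fin r → ℝ := fun i => (∑ j, Aℝ i j * b' j) + t0 i with hβ
  set F : (Fin r' → ℝ) → (Fin r → ℝ) :=
    fun x => fun j => (∑ jj, ((A j jj : ℤ) : ℝ) * x jj) + t0 j with hF
  set η : Superform n n n := Superform.pullback Mτ bτ α with hη
  have hdetcast : Dℝ.det = ((Dm.det : ℤ) : ℝ) := by
    rw [hDR, show (Matrix.of fun c a => ((Dm c a : ℤ) : ℝ)) = (Int.castRingHom ℝ).mapMatrix Dm
      from rfl]
    exact (RingHom.map_det (Int.castRingHom ℝ) Dm).symm
  have hmat : Aℝ * M' = Mτ * Dℝ := by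
    ext j a
    rw [Matrix.mul_apply, Matrix.mul_apply]
    have h0 : ((∑ jj, A j jj * E' a jj : ℤ) : ℝ) = ((∑ cI, Dm cI a * Eτ cI j : ℤ) : ℝ) := by
      exact_mod_cast congrArg (fun z : ℤ => (z : ℝ)) (hD a j)
    push_cast at h0
    simp only [hAR, hM', hMτ, hDR, Matrix.of_apply]
    rw [h0]
    exact Finset.sum_congr rfl fun cI _ => mul_comm _ _
  -- the key pointwise identity
  have hstar : ∀ (t : Fin n → ℝ) (j : Fin r),
      F (fun jj => b' jj + ∑ a, (E' a jj : ℝ) * t a) j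
        = β j + ((Mτ * Dℝ).mulVec t) j := by
    intro t j
    rw [mulVec_apply', ← hmat]
    show (∑ jj, (A j jj : ℝ) * (b' jj + ∑ a, (E' a jj : ℝ) * t a)) + t0 j
      = ((∑ jj, Aℝ j jj * b' jj) + t0 j) + ∑ a, (Aℝ * M') j a * t a
    have expand : ∑ jj, (A j jj : ℝ) * (b' jj + ∑ a, (E' a jj : ℝ) * t a)
        = (∑ jj, (A j jj : ℝ) * b' jj) + ∑ jj, ∑ a, (A j jj : ℝ) * ((E' a jj : ℝ) * t a) := by
      rw [← Finset.sum_add_distrib]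
      exact Finset.sum_congr rfl fun jj _ => by rw [mul_add, Finset.mul_sum]
    rw [expand, Finset.sum_comm]
    have : ∑ a, ∑ jj, (A j jj : ℝ) * ((E' a jj : ℝ) * t a)
        = ∑ a, (Aℝ * M') j a * t a := by
      refine Finset.sum_congr rfl fun a _ => ?_
      rw [Matrix.mul_apply, Finset.sum_mul]
      exact Finset.sum_congr rfl fun jj _ => by
        simp only [hAR, hM', Matrix.of_apply]
        ring
    rw [this]
    simp only [hAR, Matrix.of_apply]
    ring
  rcases Set.eq_empty_or_nonempty σ with hempty | ⟨x₀, hx₀⟩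
  · -- empty case : both sides vanish
    have hTσe : Tσ = ∅ := by rw [hTσ, hempty]; ext t; simp
    have hτke : τk = ∅ := by rw [← himage, hempty]; simp
    have hTτe : Tτ = ∅ := by rw [hTτ, hτke]; ext t; simp
    rw [cellIntegral, cellIntegral, Superform.integral, Superform.integral]
    rw [show {t : Fin n → ℝ | (fun j => b' j + ∑ a, (E' a j : ℝ) * t a) ∈ σ} = Tσ from rfl,
      show {t : Fin n → ℝ | (fun j => bτ j + ∑ a, (Eτ a j : ℝ) * t a) ∈ τk} = Tτ from rfl,
      hTσe, hTτe]
    simp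
  -- nonempty case
  obtain ⟨t₀, ht₀⟩ := hparam'.1 x₀ hx₀
  have hFx₀ : F x₀ ∈ τk := himage ▸ Set.mem_image_of_mem F hx₀
  obtain ⟨u₀, hu₀⟩ := hparamτ.1 (F x₀) hFx₀
  set c₀ : Fin n → ℝ := u₀ - Dℝ.mulVec t₀ with hc₀
  have hx₀eq : x₀ = fun jj => b' jj + ∑ a, (E' a jj : ℝ) * t₀ a := funext ht₀
  have hMc₀ : ∀ j, (Mτ.mulVec c₀) j = β j - bτ j := by
    intro j
    have h1 : Mτ.mulVec c₀ = Mτ.mulVec u₀ - Mτ.mulVec (Dℝ.mulVec t₀) := by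
      rw [hc₀, Matrix.mulVec_sub]
    have h2 : Mτ.mulVec u₀ j = F x₀ j - bτ j := by
      rw [mulVec_apply']
      have := hu₀ j
      rw [this]
      have : ∑ a, Mτ j a * u₀ a = ∑ a, (Eτ a j : ℝ) * u₀ a := rfl
      rw [this]; ring
    have h3 : Mτ.mulVec (Dℝ.mulVec t₀) j = F x₀ j - β j := by
      rw [show Mτ.mulVec (Dℝ.mulVec t₀) = (Mτ * Dℝ).mulVec t₀ from Matrix.mulVec_mulVec t₀ Mτ Dℝ]
      have := hstar t₀ j
      rw [← hx₀eq] at this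
      rw [this]; ring
    rw [h1, Pi.sub_apply, h2, h3]
    ring
  have hφeq : ∀ t : Fin n → ℝ,
      (fun j => bτ j + ∑ a, (Eτ a j : ℝ) * (Dℝ.mulVec t + c₀) a)
        = F (fun jj => b' jj + ∑ a, (E' a jj : ℝ) * t a) := by
    intro t
    funext j
    rw [hstar t j]
    have : ∑ a, (Eτ a j : ℝ) * (Dℝ.mulVec t + c₀) a
        = ∑ a, Mτ j a * (Dℝ.mulVec t) a + ∑ a, Mτ j a * c₀ a := by
      rw [← Finset.sum_add_distrib]
      refine Finset.sum_congr rfl fun a _ => ?_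
      show (Eτ a j : ℝ) * ((Dℝ.mulVec t) a + c₀ a) = Mτ j a * (Dℝ.mulVec t) a + Mτ j a * c₀ a
      simp only [hMτ, Matrix.of_apply]
      ring
    rw [this]
    have hmm : ∑ a, Mτ j a * (Dℝ.mulVec t) a = ((Mτ * Dℝ).mulVec t) j := by
      rw [← Matrix.mulVec_mulVec t Mτ Dℝ, mulVec_apply']
    have hcc : ∑ a, Mτ j a * c₀ a = β j - bτ j := by
      rw [← mulVec_apply', hMc₀ j]
    rw [hmm, hcc]
    ring
  have hMτinj : ∀ cc : Fin n → ℝ, Mτ.mulVec cc = 0 → cc = 0 := by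
    intro cc hcc
    refine lattice_inj Eτ bτ τk hparamτ cc fun j => ?_
    have hthis : ∑ a, Mτ j a * cc a = 0 := by
      have h := congrFun hcc j
      rw [mulVec_apply'] at h
      simpa using h
    rw [← hthis]
    exact Finset.sum_congr rfl fun a _ => by
      simp only [hMτ, Matrix.of_apply]; ring
  have hdetne : Dℝ.det ≠ 0 := by
    intro hdet0
    obtain ⟨v, hvne, hv0⟩ := Matrix.exists_mulVec_eq_zero_iff.mpr hdet0
    set L : (Fin n → ℝ) →ₗ[ℝ] (Fin r → ℝ) := (Mτ * Dℝ).mulVecLin with hL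
    have hvker : L v = 0 := by
      rw [hL, Matrix.mulVecLin_apply, ← Matrix.mulVec_mulVec v Mτ Dℝ, hv0, Matrix.mulVec_zero]
    have hspan : vectorSpan ℝ τk ≤ LinearMap.range L := by
      rw [vectorSpan_def]
      refine Submodule.span_le.mpr ?_
      rintro d hd
      rw [Set.mem_vsub] at hd
      obtain ⟨x, hx, y, hy, rfl⟩ := hd
      rw [← himage] at hx hy
      obtain ⟨p, hp, rfl⟩ := hx
      obtain ⟨q, hq, rfl⟩ := hy
      obtain ⟨tp, htp⟩ := hparam'.1 p hp
      obtain ⟨tq, htq⟩ := hparam'.1 q hq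
      refine ⟨tp - tq, ?_⟩
      rw [hL, Matrix.mulVecLin_apply, Matrix.mulVec_sub]
      funext j
      rw [show F p -ᵥ F q = F p - F q from rfl]
      rw [Pi.sub_apply, Pi.sub_apply]
      rw [show p = fun jj => b' jj + ∑ a, (E' a jj : ℝ) * tp a from funext htp,
        show q = fun jj => b' jj + ∑ a, (E' a jj : ℝ) * tq a from funext htq,
        hstar tp j, hstar tq j]
      ring
    have hker : 0 < Module.finrank ℝ (LinearMap.ker L) := by
      have : Nontrivial (LinearMap.ker L) :=
        nontrivial_of_ne ⟨v, LinearMap.mem_ker.mpr hvker⟩ 0 (by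
          intro h
          exact hvne (by simpa using congrArg Subtype.val h))
      exact Module.finrank_pos
    have hrn := LinearMap.finrank_range_add_finrank_ker L
    rw [finrank_pi_fin n] at hrn
    have hle : n ≤ Module.finrank ℝ (LinearMap.range L) := by
      calc n = Module.finrank ℝ (vectorSpan ℝ τk) := hτdim.symm
        _ ≤ Module.finrank ℝ (LinearMap.range L) := Submodule.finrank_mono hspan
    omega
  have hTset : (fun t => Dℝ.mulVec t + c₀) '' Tσ = Tτ := by
    ext u
    constructor
    · rintro ⟨t, ht, rfl⟩
      show (fun j => bτ j + ∑ a, (Eτ a j : ℝ) * (Dℝ.mulVec t + c₀) a) ∈ τk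
      rw [hφeq t]
      exact himage ▸ Set.mem_image_of_mem F ht
    · intro hu
      have : (fun j => bτ j + ∑ a, (Eτ a j : ℝ) * u a) ∈ τk := hu
      rw [← himage] at this
      obtain ⟨x, hx, hxeq⟩ := this
      obtain ⟨t, htt⟩ := hparam'.1 x hx
      have hxx : x = fun jj => b' jj + ∑ a, (E' a jj : ℝ) * t a := funext htt
      have heq2 : (fun j => bτ j + ∑ a, (Eτ a j : ℝ) * u a)
          = (fun j => bτ j + ∑ a, (Eτ a j : ℝ) * (Dℝ.mulVec t + c₀) a) := by
        rw [hφeq t, ← hxx, hxeq]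
      have hdiff : Mτ.mulVec (u - (Dℝ.mulVec t + c₀)) = 0 := by
        rw [Matrix.mulVec_sub]
        funext j
        rw [Pi.sub_apply, Pi.zero_apply, sub_eq_zero, mulVec_apply', mulVec_apply']
        have := congrFun heq2 j
        have h4 : ∑ a, (Eτ a j : ℝ) * u a = ∑ a, (Eτ a j : ℝ) * (Dℝ.mulVec t + c₀) a := by
          linarith [congrFun heq2 j, (by ring : bτ j + ∑ a, (Eτ a j : ℝ) * u a
            - (bτ j) = ∑ a, (Eτ a j : ℝ) * u a)]
        calc ∑ a, Mτ j a * u a = ∑ a, (Eτ a j : ℝ) * u a := rfl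
          _ = ∑ a, (Eτ a j : ℝ) * (Dℝ.mulVec t + c₀) a := h4
          _ = ∑ a, Mτ j a * (Dℝ.mulVec t + c₀) a := rfl
      have := hMτinj _ hdiff
      have hueq : u = Dℝ.mulVec t + c₀ := by
        have := sub_eq_zero.mp this
        exact this
      refine ⟨t, ?_, hueq.symm⟩
      show (fun j => b' j + ∑ a, (E' a j : ℝ) * t a) ∈ σ
      rw [← hxx]; exact hx
  -- measurability
  have hTσmeas : MeasurableSet Tσ := polyhedron_measurable σ hσpoly b' E'
  -- now the computation
  have step1 : cellIntegral E' b' σ (Superform.pullback Aℝ t0 α)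
      = Superform.integral (Superform.pullback (Mτ * Dℝ) β α) Tσ := by
    rw [cellIntegral, show (Matrix.of fun (j : Fin r') (a : Fin n) => (E' a j : ℝ)) = M'
      from rfl, pullback_pullback Aℝ M' t0 b' α, hmat]
  have hβtrans : (fun i => (∑ j, Mτ i j * c₀ j) + bτ i) = β := by
    funext i
    rw [← mulVec_apply', hMc₀ i]
    ring
  have step2 : Superform.pullback (Mτ * Dℝ) β α = Superform.pullback Dℝ c₀ η := by
    rw [hη, pullback_pullback Mτ Dℝ bτ c₀ α, hβtrans]
  have hηalt : η.IsAlternating := pullback_isAlternating Mτ bτ α halt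
  have step3 : ∀ t, (Superform.pullback Dℝ c₀ η) (fun i => i) (fun i => i) t
      = Dℝ.det ^ 2 * η (fun i => i) (fun i => i) (Dℝ.mulVec t + c₀) := by
    intro t
    rw [pullback_sq Dℝ c₀ η hηalt t]
    rfl
  have hCoV : ∫ u in Tτ, η (fun i => i) (fun i => i) u
      = ∫ t in Tσ, |Dℝ.det| * η (fun i => i) (fun i => i) (Dℝ.mulVec t + c₀) := by
    rw [← hTset]
    exact change_of_variables Dℝ c₀ hdetne Tσ hTσmeas _
  rw [step1, step2, Superform.integral]
  rw [show (fun t => (Superform.pullback Dℝ c₀ η) (fun i => i) (fun i => i) t)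
      = fun t => |Dℝ.det| * (|Dℝ.det| * η (fun i => i) (fun i => i) (Dℝ.mulVec t + c₀))
    from funext fun t => by rw [step3 t, ← sq_abs]; ring]
  rw [MeasureTheory.integral_const_mul, ← hCoV]
  rw [cellIntegral, Superform.integral, hdetcast]
  rw [show (Matrix.of fun (j : Fin r) (a : Fin n) => (Eτ a j : ℝ)) = Mτ from rfl, ← hη]
  rw [show {t : Fin n → ℝ | (fun j => bτ j + ∑ a, (Eτ a j : ℝ) * t a) ∈ τk} = Tτ from rfl]
  ring

/-- **Projection formula for tropical superforms.**
Let `F x = A x + t₀ : ℝ^{r'} → ℝ^r` be an affine map with integral linear part, and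
`(𝒞', m')` a weighted integral ℝ-affine polyhedral complex of pure dimension `n` in
`ℝ^{r'}` (cells `σ' i` with weights `m' i`) whose image `F_*(𝒞')` is a polyhedral
complex with cells `τ k` and push-forward weights
`m_τ = ∑_{σ' ⊆ F⁻¹(τ)} [M'_{σ'} : M_τ]·m'_{σ'} = ∑ |det D|·m'`, where `D i k` is the
matrix of `F : N_{σ' i} → N_{τ k}` with respect to the integral bases.  Then for every
compactly supported `(n,n)`-superform `α` on `F_*(𝒞')`,
`∫_{F_*(𝒞',m)} α = ∫_{(𝒞',m)} F*(α)`. -/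
theorem projection_formula_tropical {r r' n s s' : ℕ}
    (A : Matrix (Fin r) (Fin r') ℤ) (t0 : Fin r → ℝ)
    -- the source weighted complex (n-dimensional cells and weights)
    (σ' : Fin s' → Set (Fin r' → ℝ)) (m' : Fin s' → ℤ)
    (b' : Fin s' → Fin r' → ℝ) (E' : Fin s' → Fin n → Fin r' → ℤ)
    (hσ'poly : ∀ i, IsIntegralPolyhedron (σ' i)) (hσ'dim : ∀ i, pdim (σ' i) = n)
    (hσ'param : ∀ i, LatticeParam (E' i) (b' i) (σ' i))
    -- the push-forward complex
    (τ : Fin s → Set (Fin r → ℝ)) (mτ : Fin s → ℤ)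
    (bτ : Fin s → Fin r → ℝ) (Eτ : Fin s → Fin n → Fin r → ℤ)
    (hτpoly : ∀ k, IsIntegralPolyhedron (τ k)) (hτdim : ∀ k, pdim (τ k) = n)
    (hτparam : ∀ k, LatticeParam (Eτ k) (bτ k) (τ k))
    (hτdistinct : ∀ k l, k ≠ l → τ k ≠ τ l)
    -- `F_*(𝒞')` consists of the n-dimensional images
    (himg : ∀ i,
      pdim ((fun x => fun j => (∑ jj, (A j jj : ℝ) * x jj) + t0 j) '' σ' i) = n →
        ∃ k, (fun x => fun j => (∑ jj, (A j jj : ℝ) * x jj) + t0 j) '' σ' i = τ k)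
    -- `D i k` is the matrix of `F : N_{σ' i} → N_{τ k}` w.r.t. the integral bases
    (D : Fin s' → Fin s → Matrix (Fin n) (Fin n) ℤ)
    (hD : ∀ i k,
      (fun x => fun j => (∑ jj, (A j jj : ℝ) * x jj) + t0 j) '' σ' i = τ k →
        ∀ a j, (∑ jj, A j jj * E' i a jj) = ∑ cI, D i k cI a * Eτ k cI j)
    -- the push-forward weights
    (hweight : ∀ k, mτ k =
      ∑ i ∈ Finset.univ.filter
          (fun i => (fun x => fun j => (∑ jj, (A j jj : ℝ) * x jj) + t0 j) '' σ' i = τ k),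
        (((D i k).det.natAbs : ℤ) * m' i))
    -- the compactly supported (n,n)-superform
    (α : Superform r n n) (hsm : Superform.Smooth α Set.univ)
    (halt : Superform.IsAlternating α) (hsupp : IsCompact (Superform.support α)) :
    (∑ k, (mτ k : ℝ) * cellIntegral (Eτ k) (bτ k) (τ k) α)
      = ∑ i, (m' i : ℝ) *
          cellIntegral (E' i) (b' i) (σ' i)
            (Superform.pullback (Matrix.of fun j jj => (A j jj : ℝ)) t0 α) := by
  classical
  have key : ∀ i : Fin s',
      cellIntegral (E' i) (b' i) (σ' i)
          (Superform.pullback (Matrix.of fun j jj => (A j jj : ℝ)) t0 α)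
        = ∑ k, (if (fun x => fun j => (∑ jj, (A j jj : ℝ) * x jj) + t0 j) '' σ' i = τ k
            then |(((D i k).det : ℤ) : ℝ)| * cellIntegral (Eτ k) (bτ k) (τ k) α else 0) := by
    intro i
    by_cases hex : ∃ k, (fun x => fun j => (∑ jj, (A j jj : ℝ) * x jj) + t0 j) '' σ' i = τ k
    · obtain ⟨k₀, hk₀⟩ := hex
      rw [Finset.sum_eq_single k₀]
      · rw [if_pos hk₀]
        exact cell_nondegenerate A t0 (σ' i) (b' i) (E' i) (hσ'poly i) (hσ'param i)
          (τ k₀) (bτ k₀) (Eτ k₀) (hτparam k₀) (hτdim k₀) (D i k₀) hk₀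
          (fun a j => hD i k₀ hk₀ a j) α halt
      · intro k _ hkne
        rw [if_neg]
        intro h
        exact hτdistinct k k₀ hkne (h ▸ hk₀ ▸ rfl)
      · intro h
        exact absurd (Finset.mem_univ k₀) h
    · push_neg at hex
      have hzero : ∀ k : Fin s, ¬ ((fun x => fun j => (∑ jj, (A j jj : ℝ) * x jj) + t0 j)
          '' σ' i = τ k) := hex
      rw [Finset.sum_congr rfl (fun k _ => if_neg (hzero k)), Finset.sum_const, smul_zero]
      refine cell_degenerate A t0 (σ' i) (b' i) (E' i) (hσ'param i) (hσ'dim i) ?_ α halt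
      intro hpd
      obtain ⟨k, hk⟩ := himg i hpd
      exact hzero k hk
  calc (∑ k, (mτ k : ℝ) * cellIntegral (Eτ k) (bτ k) (τ k) α)
      = ∑ k, ∑ i, (if (fun x => fun j => (∑ jj, (A j jj : ℝ) * x jj) + t0 j) '' σ' i = τ k
          then ((((D i k).det.natAbs : ℤ) : ℝ) * (m' i : ℝ)) * cellIntegral (Eτ k) (bτ k) (τ k) α
          else 0) := by
        refine Finset.sum_congr rfl fun k _ => ?_
        have hw : ((mτ k : ℤ) : ℝ) = ∑ i ∈ Finset.univ.filter
            (fun i => (fun x => fun j => (∑ jj, (A j jj : ℝ) * x jj) + t0 j) '' σ' i = τ k),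
            ((((D i k).det.natAbs : ℤ) : ℝ) * (m' i : ℝ)) := by
          rw [hweight k]
          push_cast
          rfl
        rw [hw, Finset.sum_filter, Finset.sum_mul]
        refine Finset.sum_congr rfl fun i _ => ?_
        rw [ite_mul, zero_mul]
    _ = ∑ i, ∑ k, (if (fun x => fun j => (∑ jj, (A j jj : ℝ) * x jj) + t0 j) '' σ' i = τ k
          then ((((D i k).det.natAbs : ℤ) : ℝ) * (m' i : ℝ)) * cellIntegral (Eτ k) (bτ k) (τ k) α
          else 0) := Finset.sum_comm
    _ = ∑ i, (m' i : ℝ) * ∑ k,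
          (if (fun x => fun j => (∑ jj, (A j jj : ℝ) * x jj) + t0 j) '' σ' i = τ k
            then |(((D i k).det : ℤ) : ℝ)| * cellIntegral (Eτ k) (bτ k) (τ k) α else 0) := by
        refine Finset.sum_congr rfl fun i _ => ?_
        rw [Finset.mul_sum]
        refine Finset.sum_congr rfl fun k _ => ?_
        by_cases h : (fun x => fun j => (∑ jj, (A j jj : ℝ) * x jj) + t0 j) '' σ' i = τ k
        · rw [if_pos h, if_pos h]
          rw [Int.natCast_natAbs, Int.cast_abs]
          push_cast
          ring
        · rw [if_neg h, if_neg h, mul_zero]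
    _ = ∑ i, (m' i : ℝ) *
          cellIntegral (E' i) (b' i) (σ' i)
            (Superform.pullback (Matrix.of fun j jj => (A j jj : ℝ)) t0 α) := by
        refine Finset.sum_congr rfl fun i _ => ?_
        rw [key i]
end

section
/- The tropicalization map trop: (𝔾_m^r)^an → ℝ^r, sending a multiplicative seminorm p on K[z_1^{±1},…,z_r^{±1}] extending |·| on K to (−log p(z_1), …, −log p(z_r)), is continuous and proper (preimages of compact sets are compact). -/
/-- The Berkovich analytification `(𝔾_m^r)^an` of the split torus over a complete
non-archimedean field `K`: the set of multiplicative (ultrametric, nonnegative)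
seminorms on the Laurent polynomial ring `K[z_1^{±1},…,z_r^{±1}]`, modelled as
`AddMonoidAlgebra K (ℤ^r)`, extending the absolute value of `K`. -/
def TorusBerk (K : Type*) [NormedField K] (r : ℕ) : Type _ :=
  {p : AddMonoidAlgebra K (Fin r → ℤ) → ℝ //
    (∀ f g, p (f * g) = p f * p g) ∧
    (∀ f g, p (f + g) ≤ max (p f) (p g)) ∧
    (∀ a : K, p (AddMonoidAlgebra.single 0 a) = ‖a‖) ∧
    (∀ f, 0 ≤ p f)}

/-- The topology on `(𝔾_m^r)^an`: the weakest topology making `p ↦ p(f)` continuous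
for every Laurent polynomial `f` (subspace of the product topology). -/
noncomputable instance (K : Type*) [NormedField K] (r : ℕ) :
    TopologicalSpace (TorusBerk K r) := by
  unfold TorusBerk; infer_instance

/-- The tropicalization map `trop : (𝔾_m^r)^an → ℝ^r`,
`p ↦ (−log p(z_1), …, −log p(z_r))`. -/
noncomputable def tropMap {K : Type*} [NormedField K] {r : ℕ} (p : TorusBerk K r) :
    Fin r → ℝ :=
  fun i => - Real.log (p.1 (AddMonoidAlgebra.single (Pi.single i 1) 1))

/-!
Every monomial `z^m` is a unit of the Laurent polynomial ring, so a multiplicative seminorm `p`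
is positive on it and `m ↦ log p(z^m)` is additive: `p(z^m) = exp (-⟨m, trop p⟩)`. The
ultrametric inequality then bounds `p(f)` by a continuous function of `trop p`, so over a compact
`C ⊆ ℝ^r` every coordinate `p ↦ p(f)` is bounded on `trop⁻¹ C`. Since the seminorms form a closed
subset of `ℝ^{K[ℤ^r]}`, the closed set `trop⁻¹ C` lies in a compact product of intervals.
-/

open AddMonoidAlgebra

theorem AddMonoidHom.apply_eq_sum_zsmul_single {ι M : Type*} [Fintype ι] [DecidableEq ι]
    [AddCommGroup M] (ℓ : (ι → ℤ) →+ M) (m : ι → ℤ) :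
    ℓ m = ∑ i, m i • ℓ (Pi.single i 1) := by
  conv_lhs => rw [← Finset.univ_sum_single m]
  simp only [map_sum, ← map_zsmul, ← Pi.single_smul', smul_eq_mul, mul_one]

theorem IsNonarchimedean.apply_sum_le_sum {α β : Type*} [AddCommMonoid α] {f : α → ℝ}
    (hf : IsNonarchimedean f) (f_zero : f 0 = 0) (f_nonneg : ∀ x, 0 ≤ f x) (s : Finset β)
    (g : β → α) : f (∑ i ∈ s, g i) ≤ ∑ i ∈ s, f (g i) := by
  rcases s.eq_empty_or_nonempty with rfl | hs
  · simp [f_zero]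
  · obtain ⟨b, hb, hle⟩ := hf.finset_image_add_of_nonempty g hs
    exact hle.trans (Finset.single_le_sum (fun i _ => f_nonneg (g i)) hb)

namespace TorusBerk

variable {K : Type*} [NormedField K] {r : ℕ} (p : TorusBerk K r)

theorem map_mul (f g : AddMonoidAlgebra K (Fin r → ℤ)) : p.1 (f * g) = p.1 f * p.1 g :=
  p.2.1 f g

theorem isNonarchimedean : IsNonarchimedean p.1 := p.2.2.1

theorem map_single_zero (a : K) : p.1 (single 0 a) = ‖a‖ := p.2.2.2.1 a

theorem nonneg (f : AddMonoidAlgebra K (Fin r → ℤ)) : 0 ≤ p.1 f := p.2.2.2.2 f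

theorem map_zero : p.1 0 = 0 := by simpa using p.map_single_zero 0

theorem map_one : p.1 1 = 1 := by simpa [← one_def] using p.map_single_zero 1

theorem monomial_pos (v : Fin r → ℤ) : 0 < p.1 (single v 1) := by
  have h : p.1 (single v 1) * p.1 (single (-v) 1) = 1 := by
    rw [← map_mul, single_mul_single, add_neg_cancel, mul_one, ← one_def, map_one]
  exact (p.nonneg _).lt_of_ne (left_ne_zero_of_mul_eq_one h).symm

noncomputable def logMonomial : (Fin r → ℤ) →+ ℝ where
  toFun v := Real.log (p.1 (single v 1))
  map_zero' := by rw [← one_def, map_one, Real.log_one]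
  map_add' v w := by
    rw [← Real.log_mul (p.monomial_pos v).ne' (p.monomial_pos w).ne', ← map_mul,
      single_mul_single, mul_one]

theorem monomial_eq_exp (m : Fin r → ℤ) :
    p.1 (single m 1) = Real.exp (-∑ i, m i * tropMap p i) := by
  have h := (logMonomial p).apply_eq_sum_zsmul_single m
  simp only [logMonomial, AddMonoidHom.coe_mk, ZeroHom.coe_mk, zsmul_eq_mul] at h
  simp only [tropMap, mul_neg, Finset.sum_neg_distrib, neg_neg, ← h]
  exact (Real.exp_log (p.monomial_pos m)).symm

theorem map_single (m : Fin r → ℤ) (a : K) : p.1 (single m a) = ‖a‖ * p.1 (single m 1) := by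
  rw [← p.map_single_zero, ← map_mul, single_mul_single, zero_add, mul_one]

noncomputable def tropBound (f : AddMonoidAlgebra K (Fin r → ℤ)) (y : Fin r → ℝ) : ℝ :=
  ∑ m ∈ f.coeff.support, ‖f.coeff m‖ * Real.exp (-∑ i, (m i : ℝ) * y i)

theorem continuous_tropBound (f : AddMonoidAlgebra K (Fin r → ℤ)) :
    Continuous (tropBound f) := by
  unfold tropBound; fun_prop

theorem apply_le_tropBound (f : AddMonoidAlgebra K (Fin r → ℤ)) :
    p.1 f ≤ tropBound f (tropMap p) := by
  conv_lhs => rw [← sum_coeff_single f, Finsupp.sum]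
  refine (p.isNonarchimedean.apply_sum_le_sum p.map_zero p.nonneg _ _).trans_eq
    (Finset.sum_congr rfl fun m _ => ?_)
  rw [map_single, monomial_eq_exp]

theorem isClosedEmbedding_val :
    Topology.IsClosedEmbedding
      (Subtype.val : TorusBerk K r → AddMonoidAlgebra K (Fin r → ℤ) → ℝ) := by
  refine IsClosed.isClosedEmbedding_subtypeVal (s := {x | _ ∧ _ ∧ _ ∧ _}) ?_
  simp only [Set.ofPred_and, Set.ofPred_forall]
  refine .inter (isClosed_iInter fun f => isClosed_iInter fun g => ?_) <|
    .inter (isClosed_iInter fun f => isClosed_iInter fun g => ?_) <|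
    .inter (isClosed_iInter fun a => ?_) (isClosed_iInter fun f => ?_)
  · exact isClosed_eq (continuous_apply _) ((continuous_apply f).mul (continuous_apply g))
  · exact isClosed_le (continuous_apply _) ((continuous_apply f).max (continuous_apply g))
  · exact isClosed_eq (continuous_apply _) continuous_const
  · exact isClosed_le continuous_const (continuous_apply _)

theorem continuous_apply (f : AddMonoidAlgebra K (Fin r → ℤ)) :
    Continuous fun p : TorusBerk K r => p.1 f :=
  (_root_.continuous_apply f).comp isClosedEmbedding_val.continuous

end TorusBerk

section

variable {K : Type*} [NormedField K] {r : ℕ}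

theorem continuous_tropMap : Continuous (tropMap (K := K) (r := r)) :=
  continuous_pi fun _ =>
    ((TorusBerk.continuous_apply _).log fun p => (p.monomial_pos _).ne').neg

theorem bddAbove_apply_preimage_tropMap {C : Set (Fin r → ℝ)} (hC : IsCompact C)
    (f : AddMonoidAlgebra K (Fin r → ℤ)) :
    BddAbove ((fun p : TorusBerk K r => p.1 f) '' (tropMap ⁻¹' C)) := by
  obtain ⟨M, hM⟩ := hC.bddAbove_image (TorusBerk.continuous_tropBound f).continuousOn
  exact ⟨M, Set.forall_mem_image.2 fun p hp => (p.apply_le_tropBound f).trans (hM ⟨_, hp, rfl⟩)⟩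

theorem isCompact_preimage_tropMap {C : Set (Fin r → ℝ)} (hC : IsCompact C) :
    IsCompact (tropMap (K := K) ⁻¹' C) := by
  choose M hM using bddAbove_apply_preimage_tropMap (K := K) hC
  refine (TorusBerk.isClosedEmbedding_val.isCompact_preimage
    (isCompact_univ_pi fun f => isCompact_Icc (a := 0) (b := M f))).of_isClosed_subset
    (hC.isClosed.preimage continuous_tropMap)
    fun p hp f _ => ⟨TorusBerk.nonneg p f, hM f ⟨p, hp, rfl⟩⟩

end

theorem tropMap_continuous_and_proper_general {K : Type*} [NormedField K] (r : ℕ) :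
    Continuous (tropMap (K := K) (r := r)) ∧
      ∀ C : Set (Fin r → ℝ), IsCompact C →
        IsCompact (tropMap (K := K) (r := r) ⁻¹' C) :=
  ⟨continuous_tropMap, fun _ => isCompact_preimage_tropMap⟩

/-- The tropicalization map `trop : (𝔾_m^r)^an → ℝ^r` is continuous
and proper (preimages of compact sets are compact). -/
theorem tropMap_continuous_and_proper {K : Type*} [NormedField K]
    [IsUltrametricDist K] [IsAlgClosed K] [CompleteSpace K]
    (hnontriv : ∃ a : K, a ≠ 0 ∧ ‖a‖ ≠ 1) (r : ℕ) :
    Continuous (tropMap (K := K) (r := r)) ∧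
      ∀ C : Set (Fin r → ℝ), IsCompact C →
        IsCompact (tropMap (K := K) (r := r) ⁻¹' C) :=
  tropMap_continuous_and_proper_general r
end
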